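/- arXiv:2405.06763 — 3 statements merged into one kernel-verified Lean document; each statement's English description precedes it below -/
import Mathlib

section
/- Let L ≥ 1 be a natural number and ψ ∈ ℝ^L a fixed vector. For each n ∈ ℕ let (Ω_n, P_n) be a probability space carrying a random vector ψ̂_n : Ω_n → ℝ^L, deterministic scales σ_n ∈ ℝ^L with σ_{n,l} > 0 for every coordinate l, and a family (G_{n,m})_{m∈ℕ} of ℝ^L-valued random vectors whose coordinates (G_{n,m,l})_{m,l} are i.i.d. standard Gaussian N(0,1) and such that the family (G_{n,m})_m is independent of ψ̂_n. Define the resampled statistics ψ̂_n^{[m]} := ψ̂_n + σ_n ⊙ G_{n,m}, where ⊙ is the coordinatewise product (so that, given the data, the ψ̂_n^{[m]} are i.i.d. N(ψ̂_n, σ_n)). Assume that for every l ∈ {1,…,L} and every z > 0, limsup_{n→∞} P_n( |ψ̂_{n,l} − ψ_l| / σ_{n,l} ≥ z ) ≤ 2(1 − Φ(z)). Fix ν with 0 < ν ≤ 1/2, let z_ν > 0 satisfy Φ(z_ν) = 1 − ν/(2L), and set c(ν) := (2π)^{−L/2} exp(−(L/2) z_ν²) and err_n(M, ν) := (1/2)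 (2 log n / (c(ν) M))^{1/L}. Then liminf_{n→∞} liminf_{M→∞} P_n( min_{1≤m≤M} max_{1≤l≤L} |ψ̂_{n,l}^{[m]} − ψ_l| / σ_{n,l} ≤ err_n(M, ν) ) ≥ 1 − ν. -/
/-!
Given the data, the `M` resampled vectors are independent Gaussian draws around `ψ̂_n`, and
each one lands in the box of half-width `e` around `ψ` with probability at least
`(2 e φ(z + e))^L` as soon as every standardized error `|ψ̂_{n,l} - ψ_l| / σ_{n,l}` is at most `z`,
`φ` being the standard Gaussian density. Hence, on that event, all `M` draws miss the box with
probability at most `(1 - (2 e φ(z + e))^L)^M ≤ exp(-M (2 e φ(z + e))^L)`. For `e = err_n(M, ν)` and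
`z = z_ν` the exponent tends to `2 log n` as `M → ∞`, because `φ(z_ν)^L = c(ν)`, so the coverage
probability is asymptotically at least `P(all standardized errors ≤ z_ν) - n⁻²`. By the tail
hypothesis and a union bound over the `L` coordinates, the former has `liminf` at least `1 - ν`.
-/

open MeasureTheory ProbabilityTheory Real Filter

/-- The cumulative distribution function of the standard Gaussian measure `N(0,1)` on `ℝ`. -/
noncomputable def stdGaussianCDF (x : ℝ) : ℝ :=
  ProbabilityTheory.cdf (ProbabilityTheory.gaussianReal 0 1) x

open scoped NNReal ENNReal Topology

lemma gaussianPDFReal_le_of_abs_sub_le {μ : ℝ} {v : ℝ≥0} {x y : ℝ} (h : |x - μ| ≤ |y - μ|) :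
    gaussianPDFReal μ v y ≤ gaussianPDFReal μ v x := by
  have : (x - μ) ^ 2 ≤ (y - μ) ^ 2 := sq_le_sq.mpr h
  simp only [gaussianPDFReal]
  gcongr

lemma continuous_gaussianPDFReal (μ : ℝ) (v : ℝ≥0) : Continuous (gaussianPDFReal μ v) := by
  unfold gaussianPDFReal
  fun_prop

lemma gaussianPDFReal_zero_one_pow (L : ℕ) (z : ℝ) :
    gaussianPDFReal 0 1 z ^ L = (2 * π) ^ (-(L : ℝ) / 2) * exp (-((L : ℝ) / 2) * z ^ 2) := by
  have h2π : 0 ≤ 2 * π := by positivity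
  rw [gaussianPDFReal, mul_pow, ← exp_nat_mul, NNReal.coe_one, mul_one, sqrt_eq_rpow,
    ← rpow_neg h2π, ← rpow_mul_natCast h2π]
  congr 2 <;> ring

/-- The density on `closedBall t e` is at least its value at distance `Z + e` from the mean. -/
lemma ofReal_two_mul_gaussianPDFReal_le_gaussianReal_closedBall {μ : ℝ} {v : ℝ≥0} (hv : v ≠ 0)
    {t e Z : ℝ} (he : 0 ≤ e) (ht : |t - μ| ≤ Z) :
    ENNReal.ofReal (2 * e * gaussianPDFReal μ v (μ + (Z + e))) ≤
      gaussianReal μ v (Metric.closedBall t e) := by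
  have hZe : 0 ≤ Z + e := by linarith [abs_nonneg (t - μ)]
  have hpdf : ∀ x ∈ Set.Icc (t - e) (t + e),
      ENNReal.ofReal (gaussianPDFReal μ v (μ + (Z + e))) ≤ gaussianPDF μ v x := by
    intro x hx
    refine ENNReal.ofReal_le_ofReal (gaussianPDFReal_le_of_abs_sub_le ?_)
    rw [add_sub_cancel_left, abs_of_nonneg hZe]
    calc |x - μ| ≤ |x - t| + |t - μ| := abs_sub_le x t μ
      _ ≤ e + Z := add_le_add (abs_sub_le_iff.mpr ⟨by linarith [hx.2], by linarith [hx.1]⟩) ht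
      _ = Z + e := add_comm e Z
  rw [Real.closedBall_eq_Icc]
  calc ENNReal.ofReal (2 * e * gaussianPDFReal μ v (μ + (Z + e)))
      = ∫⁻ _ in Set.Icc (t - e) (t + e), ENNReal.ofReal (gaussianPDFReal μ v (μ + (Z + e))) := by
        rw [setLIntegral_const, Real.volume_Icc, ← ENNReal.ofReal_mul (gaussianPDFReal_nonneg ..)]
        ring_nf
    _ ≤ ∫⁻ x in Set.Icc (t - e) (t + e), gaussianPDF μ v x :=
        setLIntegral_mono (measurable_gaussianPDF μ v) hpdf
    _ = gaussianReal μ v (Set.Icc (t - e) (t + e)) := (gaussianReal_apply μ hv _).symm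

lemma two_mul_gaussianPDFReal_le_one {μ : ℝ} {v : ℝ≥0} (hv : v ≠ 0) {e Z : ℝ} (he : 0 ≤ e)
    (hZ : 0 ≤ Z) : 2 * e * gaussianPDFReal μ v (μ + (Z + e)) ≤ 1 :=
  ENNReal.ofReal_le_one.mp <|
    (ofReal_two_mul_gaussianPDFReal_le_gaussianReal_closedBall hv (t := μ) he
      (by rwa [sub_self, abs_zero])).trans prob_le_one

lemma ofReal_pow_le_pi_gaussianReal_setOf_forall_abs_sub_le {ι : Type*} [Fintype ι]
    {t : ι → ℝ} {e Z : ℝ} (he : 0 ≤ e) (ht : ∀ i, |t i| ≤ Z) :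
    ENNReal.ofReal ((2 * e * gaussianPDFReal 0 1 (Z + e)) ^ Fintype.card ι) ≤
      Measure.pi (fun _ : ι => gaussianReal 0 1) {u | ∀ i, |u i - t i| ≤ e} := by
  have hbox : {u : ι → ℝ | ∀ i, |u i - t i| ≤ e} =
      Set.univ.pi fun i => Metric.closedBall (t i) e := by
    ext u
    simp [Set.mem_pi, Real.dist_eq]
  rw [hbox, Measure.pi_pi,
    ENNReal.ofReal_pow (by have := gaussianPDFReal_nonneg 0 1 (Z + e); positivity),
    ← Finset.card_univ, ← Finset.prod_const]
  gcongr with i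
  simpa using ofReal_two_mul_gaussianPDFReal_le_gaussianReal_closedBall one_ne_zero he
    (μ := 0) (by simpa using ht i)

lemma MeasureTheory.Measure.infinitePi_setOf_forall_notMem {κ X : Type*} [MeasurableSpace X]
    (μ : Measure X) [IsProbabilityMeasure μ] {B : Set X} (hB : MeasurableSet B) (s : Finset κ) :
    Measure.infinitePi (fun _ : κ => μ) {w | ∀ m ∈ s, w m ∉ B} = (1 - μ B) ^ s.card := by
  have : {w : κ → X | ∀ m ∈ s, w m ∉ B} = Set.pi s fun _ => Bᶜ := by ext; simp [Set.mem_pi]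
  rw [this, Measure.infinitePi_pi _ fun _ _ => hB.compl, prob_compl_eq_one_sub hB,
    Finset.prod_const]

lemma infinitePi_gaussianReal_setOf_forall_not_forall_abs_sub_le {κ ι : Type*} [Fintype ι]
    {t : ι → ℝ} {e Z : ℝ} (he : 0 ≤ e) (ht : ∀ i, |t i| ≤ Z) (s : Finset κ) :
    Measure.infinitePi (fun _ : κ × ι => gaussianReal 0 1)
        {y | ∀ m ∈ s, ¬ ∀ i, |y (m, i) - t i| ≤ e} ≤
      ENNReal.ofReal ((1 - (2 * e * gaussianPDFReal 0 1 (Z + e)) ^ Fintype.card ι) ^ s.card) := by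
  set box := {u : ι → ℝ | ∀ i, |u i - t i| ≤ e}
  have hbox : MeasurableSet box := by measurability
  have hq : 0 ≤ (2 * e * gaussianPDFReal 0 1 (Z + e)) ^ Fintype.card ι := by
    have := gaussianPDFReal_nonneg 0 1 (Z + e); positivity
  have hq1 : (2 * e * gaussianPDFReal 0 1 (Z + e)) ^ Fintype.card ι ≤ 1 :=
    ENNReal.ofReal_le_one.mp
      ((ofReal_pow_le_pi_gaussianReal_setOf_forall_abs_sub_le he ht).trans prob_le_one)
  -- currying groups the coordinates into the independent blocks `y (m, ·)`
  rw [show {y : κ × ι → ℝ | ∀ m ∈ s, ¬ ∀ i, |y (m, i) - t i| ≤ e} =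
      MeasurableEquiv.curry κ ι ℝ ⁻¹' {w | ∀ m ∈ s, w m ∉ box} from rfl,
    ← MeasurableEquiv.map_apply,
    Measure.infinitePi_map_curry (fun _ _ => gaussianReal 0 1),
    Measure.infinitePi_setOf_forall_notMem _ hbox, Measure.infinitePi_eq_pi,
    ENNReal.ofReal_pow (sub_nonneg.2 hq1), ENNReal.ofReal_sub _ hq, ENNReal.ofReal_one]
  gcongr
  exact ofReal_pow_le_pi_gaussianReal_setOf_forall_abs_sub_le he ht

lemma tendsto_two_mul_gaussianPDFReal_pow_mul_natCast {L : ℕ} (hL : L ≠ 0) {Z r c : ℝ}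
    (hr : 0 ≤ r) (hc : 0 < c) {e : ℕ → ℝ}
    (he : ∀ M, e M = 1 / 2 * (r / (c * M)) ^ (1 / (L : ℝ))) :
    Tendsto (fun M : ℕ => (2 * e M * gaussianPDFReal 0 1 (Z + e M)) ^ L * M) atTop
      (𝓝 (r / c * gaussianPDFReal 0 1 Z ^ L)) := by
  have hpow : ∀ M : ℕ, (2 * e M) ^ L = r / (c * M) := fun M => by
    rw [he, ← mul_assoc, mul_one_div_cancel two_ne_zero, one_mul, one_div,
      rpow_inv_natCast_pow (by positivity) hL]
  have he0 : Tendsto e atTop (𝓝 0) := by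
    have hbase : Tendsto (fun M : ℕ => r / (c * M)) atTop (𝓝 0) := by
      simpa only [← div_div] using tendsto_const_div_atTop_nhds_zero_nat (r / c)
    have := (hbase.rpow_const (Or.inr (by positivity : (0 : ℝ) ≤ 1 / L))).const_mul (1 / 2)
    rw [zero_rpow (by positivity), mul_zero] at this
    exact this.congr fun M => (he M).symm
  have hpdf : Tendsto (fun M => gaussianPDFReal 0 1 (Z + e M) ^ L) atTop
      (𝓝 (gaussianPDFReal 0 1 Z ^ L)) :=
    (((continuous_gaussianPDFReal 0 1).tendsto Z).comp
      (by simpa using (tendsto_const_nhds (x := Z)).add he0)).pow L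
  refine (hpdf.const_mul (r / c)).congr' ?_
  filter_upwards [eventually_ge_atTop 1] with M hM
  have hM0 : (M : ℝ) ≠ 0 := by positivity
  rw [mul_pow, hpow]
  field_simp

lemma le_liminf_of_forall_eventually_sub_le {α : Type*} {f : Filter α} [f.NeBot] {u : α → ℝ}
    {a C : ℝ}
    (hu : ∀ n, u n ≤ C) (h : ∀ ε > 0, ∀ᶠ n in f, a - ε ≤ u n) : a ≤ liminf u f :=
  le_of_forall_pos_le_add fun ε hε =>
    sub_le_iff_le_add.mp (le_liminf_of_le (isCoboundedUnder_ge_of_le f hu) (h ε hε))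

lemma sub_le_liminf_of_le_add {α : Type*} {f : Filter α} [f.NeBot] {u v : α → ℝ} {a b C : ℝ}
    (hu : ∀ n, u n ≤ C) (hv : Tendsto v f (𝓝 b)) (h : ∀ n, a ≤ u n + v n) :
    a - b ≤ liminf u f :=
  le_liminf_of_forall_eventually_sub_le hu fun ε hε =>
    (hv.eventually (gt_mem_nhds (lt_add_of_pos_right b hε))).mono fun n hn => by
      linarith [h n]

lemma one_sub_pow_le_exp_neg_mul {p : ℝ} (hp : p ≤ 1) (M : ℕ) :
    (1 - p) ^ M ≤ exp (-(p * M)) :=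
  calc (1 - p) ^ M ≤ exp (-p) ^ M := pow_le_pow_left₀ (by linarith) (one_sub_le_exp_neg p) M
    _ = exp (-(p * M)) := by rw [← exp_nat_mul]; ring_nf

lemma sub_exp_neg_le_liminf_of_le_add_one_sub_pow {u p : ℕ → ℝ} {a r C : ℝ}
    (hu : ∀ M, u M ≤ C) (hp : ∀ M, p M ≤ 1) (hpM : Tendsto (fun M => p M * M) atTop (𝓝 r))
    (h : ∀ M, a ≤ u M + (1 - p M) ^ M) : a - exp (-r) ≤ liminf u atTop :=
  sub_le_liminf_of_le_add hu ((continuous_exp.tendsto _).comp hpM.neg) fun M =>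
    (h M).trans (add_le_add le_rfl (one_sub_pow_le_exp_neg_mul (hp M) M))

lemma eventually_one_sub_sum_sub_le_measureReal {ι : Type*} [Fintype ι] {Ω : ℕ → Type*}
    [∀ n, MeasurableSpace (Ω n)] {P : ∀ n, Measure (Ω n)} [∀ n, IsProbabilityMeasure (P n)]
    {A : ∀ n, Set (Ω n)} {B : ι → ∀ n, Set (Ω n)} (hAB : ∀ n, (A n)ᶜ ⊆ ⋃ i, B i n)
    {β : ι → ℝ} (hB : ∀ i, limsup (fun n => (P n).real (B i n)) atTop ≤ β i)
    {ε : ℝ} (hε : 0 < ε) :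
    ∀ᶠ n in atTop, 1 - ∑ i, β i - ε ≤ (P n).real (A n) := by
  -- dividing by `card ι + 1` keeps `δ` positive when `ι` is empty
  set δ := ε / (Fintype.card ι + 1)
  have hδ : 0 < δ := by positivity
  have hsmall : ∀ᶠ n in atTop, ∀ i, (P n).real (B i n) < β i + δ :=
    eventually_all.2 fun i => eventually_lt_of_limsup_lt
      ((hB i).trans_lt (lt_add_of_pos_right _ hδ))
      (isBoundedUnder_of ⟨1, fun n => measureReal_le_one⟩)
  filter_upwards [hsmall] with n hn
  have hcover : 1 ≤ (P n).real (A n) + ∑ i, (P n).real (B i n) :=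
    calc 1 = (P n).real (A n ∪ (A n)ᶜ) := by simp
      _ ≤ (P n).real (A n) + (P n).real (⋃ i, B i n) :=
        (measureReal_union_le _ _).trans (add_le_add le_rfl (measureReal_mono (hAB n)))
      _ ≤ (P n).real (A n) + ∑ i, (P n).real (B i n) :=
        add_le_add le_rfl (measureReal_iUnion_fintype_le _)
  have hsum : ∑ i, (P n).real (B i n) ≤ ∑ i, β i + ε := by
    calc ∑ i, (P n).real (B i n) ≤ ∑ i, (β i + δ) := Finset.sum_le_sum fun i _ => (hn i).le
      _ = ∑ i, β i + Fintype.card ι * δ := by simp [Finset.sum_add_distrib]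
      _ ≤ ∑ i, β i + ε := by
        have : (Fintype.card ι : ℝ) * δ ≤ ε := by
          rw [mul_div_assoc', div_le_iff₀ (by positivity)]; nlinarith
        linarith
  linarith

lemma ProbabilityTheory.IndepFun.measure_prodMk_preimage_le {Ω α β : Type*} [MeasurableSpace Ω]
    [MeasurableSpace α] [MeasurableSpace β] {P : Measure Ω} [IsProbabilityMeasure P]
    {X : Ω → α} {Y : Ω → β} (hXY : IndepFun X Y P) (hX : Measurable X) (hY : Measurable Y)
    {S : Set (α × β)} (hS : MeasurableSet S) {q : ℝ≥0∞}
    (hq : ∀ x, P.map Y (Prod.mk x ⁻¹' S) ≤ q) :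
    P ((fun ω => (X ω, Y ω)) ⁻¹' S) ≤ q := by
  have := Measure.isProbabilityMeasure_map (μ := P) hX.aemeasurable
  rw [← Measure.map_apply (hX.prodMk hY) hS,
    (indepFun_iff_map_prod_eq_prod_map_map hX.aemeasurable hY.aemeasurable).mp hXY,
    Measure.prod_apply hS]
  calc ∫⁻ x, P.map Y (Prod.mk x ⁻¹' S) ∂P.map X ≤ ∫⁻ _, q ∂P.map X := lintegral_mono hq
    _ = q := by simp

lemma abs_add_mul_sub_div_eq {x y ψ σ : ℝ} (hσ : 0 < σ) :
    |x + σ * y - ψ| / σ = |y - (ψ - x) / σ| := by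
  rw [div_eq_iff hσ.ne', ← abs_of_pos hσ, ← abs_mul, abs_of_pos hσ]
  congr 1
  field_simp
  ring

section Resampling

variable {ι Ω : Type*} [Fintype ι] [MeasurableSpace Ω] {P : Measure Ω} [IsProbabilityMeasure P]
  {ψ : ι → ℝ} {ψh : Ω → ι → ℝ} {σ : ι → ℝ} {G : ℕ → Ω → ι → ℝ}

lemma measure_le_measure_resample_hit_add (hψh : Measurable ψh) (hσ : ∀ i, 0 < σ i)
    (hGmeas : ∀ m i, Measurable fun ω => G m ω i)
    (hGiid : iIndepFun (fun (p : ℕ × ι) ω => G p.1 ω p.2) P)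
    (hGgauss : ∀ p : ℕ × ι, P.map (fun ω => G p.1 ω p.2) = gaussianReal 0 1)
    (hGindep : IndepFun (fun ω (p : ℕ × ι) => G p.1 ω p.2) ψh P) {Z e : ℝ} (he : 0 ≤ e)
    (M : ℕ) :
    P {ω | ∀ i, |ψh ω i - ψ i| / σ i ≤ Z} ≤
      P {ω | ∃ m, 1 ≤ m ∧ m ≤ M ∧ ∀ i, |ψh ω i + σ i * G m ω i - ψ i| / σ i ≤ e} +
        ENNReal.ofReal ((1 - (2 * e * gaussianPDFReal 0 1 (Z + e)) ^ Fintype.card ι) ^ M) := by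
  set noise : Ω → ℕ × ι → ℝ := fun ω p => G p.1 ω p.2
  have hnoise : Measurable noise := measurable_pi_lambda _ fun p => hGmeas p.1 p.2
  have hlaw : P.map noise = Measure.infinitePi fun _ => gaussianReal 0 1 := by
    rw [hGiid.map_fun_eq_infinitePi_map fun (p : ℕ × ι) => hGmeas p.1 p.2]
    simp_rw [hGgauss]
  -- data in the `Z`-box and all `M` resamples missing, as a set of (data, noise) pairs; its
  -- sections are Gaussian miss events around `(ψ - x) / σ`
  set S : Set ((ι → ℝ) × (ℕ × ι → ℝ)) := {z | (∀ i, |z.1 i - ψ i| / σ i ≤ Z) ∧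
    ∀ m ∈ Finset.Icc 1 M, ¬ ∀ i, |z.2 (m, i) - (ψ i - z.1 i) / σ i| ≤ e}
  have hS : MeasurableSet S := by measurability
  have hsplit : {ω | ∀ i, |ψh ω i - ψ i| / σ i ≤ Z} ⊆
      {ω | ∃ m, 1 ≤ m ∧ m ≤ M ∧ ∀ i, |ψh ω i + σ i * G m ω i - ψ i| / σ i ≤ e} ∪
        (fun ω => (ψh ω, noise ω)) ⁻¹' S := by
    intro ω hA
    refine or_iff_not_imp_left.2 fun hnohit => ⟨hA, fun m hm hhit => hnohit
      ⟨m, (Finset.mem_Icc.1 hm).1, (Finset.mem_Icc.1 hm).2, fun i => ?_⟩⟩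
    rw [abs_add_mul_sub_div_eq (hσ i)]
    exact hhit i
  have hsection : ∀ x, P.map noise (Prod.mk x ⁻¹' S) ≤
      ENNReal.ofReal ((1 - (2 * e * gaussianPDFReal 0 1 (Z + e)) ^ Fintype.card ι) ^ M) := by
    intro x
    by_cases hx : ∀ i, |x i - ψ i| / σ i ≤ Z
    · have ht : ∀ i, |(ψ i - x i) / σ i| ≤ Z := fun i => by
        rw [abs_div, abs_sub_comm, abs_of_pos (hσ i)]
        exact hx i
      have hmiss :=
        infinitePi_gaussianReal_setOf_forall_not_forall_abs_sub_le he ht (Finset.Icc 1 M)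
      rw [Nat.card_Icc, add_tsub_cancel_right] at hmiss
      rw [hlaw]
      exact (measure_mono fun y hy => hy.2).trans hmiss
    · simp [S, hx]
  calc _ ≤ _ + P ((fun ω => (ψh ω, noise ω)) ⁻¹' S) :=
        (measure_mono hsplit).trans (measure_union_le _ _)
    _ ≤ _ := by
      gcongr
      exact hGindep.symm.measure_prodMk_preimage_le hψh hnoise hS hsection

lemma measureReal_sub_exp_neg_le_liminf_resample_hit [Nonempty ι]
    (hψh : Measurable ψh) (hσ : ∀ i, 0 < σ i)
    (hGmeas : ∀ m i, Measurable fun ω => G m ω i)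
    (hGiid : iIndepFun (fun (p : ℕ × ι) ω => G p.1 ω p.2) P)
    (hGgauss : ∀ p : ℕ × ι, P.map (fun ω => G p.1 ω p.2) = gaussianReal 0 1)
    (hGindep : IndepFun (fun ω (p : ℕ × ι) => G p.1 ω p.2) ψh P) {Z r c : ℝ} (hZ : 0 ≤ Z)
    (hr : 0 ≤ r) (hc : c = gaussianPDFReal 0 1 Z ^ Fintype.card ι) {e : ℕ → ℝ}
    (he : ∀ M, e M = 1 / 2 * (r / (c * M)) ^ (1 / (Fintype.card ι : ℝ))) :
    P.real {ω | ∀ i, |ψh ω i - ψ i| / σ i ≤ Z} - exp (-r) ≤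
      liminf (fun M => P.real {ω | ∃ m, 1 ≤ m ∧ m ≤ M ∧
        ∀ i, |ψh ω i + σ i * G m ω i - ψ i| / σ i ≤ e M}) atTop := by
  have hc0 : 0 < c := hc ▸ pow_pos (gaussianPDFReal_pos _ _ _ one_ne_zero) _
  have he0 : ∀ M, 0 ≤ e M := fun M => by rw [he]; positivity
  have hp1 : ∀ M, (2 * e M * gaussianPDFReal 0 1 (Z + e M)) ^ Fintype.card ι ≤ 1 := fun M =>
    pow_le_one₀ (by have := gaussianPDFReal_nonneg 0 1 (Z + e M); have := he0 M; positivity)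
      (by simpa using two_mul_gaussianPDFReal_le_one one_ne_zero (he0 M) hZ (μ := 0))
  refine sub_exp_neg_le_liminf_of_le_add_one_sub_pow (fun M => measureReal_le_one) hp1 ?_
    fun M => ?_
  · simpa [← hc, hc0.ne'] using
      tendsto_two_mul_gaussianPDFReal_pow_mul_natCast Fintype.card_ne_zero hr hc0 he (Z := Z)
  · have h := measure_le_measure_resample_hit_add hψh hσ hGmeas hGiid hGgauss hGindep
      (ψ := ψ) (Z := Z) (he0 M) M
    rwa [← ENNReal.toReal_le_toReal (by finiteness) (by finiteness),
      ENNReal.toReal_add (by finiteness) (by finiteness),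
      ENNReal.toReal_ofReal (pow_nonneg (sub_nonneg.2 (hp1 M)) M)] at h

end Resampling

theorem resampling_min_max_coverage_general
    (L : ℕ) (hL : 1 ≤ L) (ψ : Fin L → ℝ)
    {Ω : ℕ → Type*} [∀ n, MeasurableSpace (Ω n)]
    (P : ∀ n, Measure (Ω n)) [∀ n, IsProbabilityMeasure (P n)]
    (ψhat : ∀ n, Ω n → Fin L → ℝ)
    (hψhatMeas : ∀ n, Measurable (ψhat n))
    (σ : ℕ → Fin L → ℝ) (hσ : ∀ n l, 0 < σ n l)
    (G : ∀ n, ℕ → Ω n → Fin L → ℝ)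
    (hGmeas : ∀ n m l, Measurable (fun ω => G n m ω l))
    (hGiid : ∀ n, ProbabilityTheory.iIndepFun
      (fun (p : ℕ × Fin L) (ω : Ω n) => G n p.1 ω p.2) (P n))
    (hGgauss : ∀ n (p : ℕ × Fin L),
      Measure.map (fun ω => G n p.1 ω p.2) (P n) = ProbabilityTheory.gaussianReal 0 1)
    (hGindepData : ∀ n, ProbabilityTheory.IndepFun
      (fun (ω : Ω n) (p : ℕ × Fin L) => G n p.1 ω p.2) (ψhat n) (P n))
    (htail : ∀ (l : Fin L) (z : ℝ), 0 < z →
      Filter.limsup (fun n => (P n {ω | z ≤ |ψhat n ω l - ψ l| / σ n l}).toReal)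
        Filter.atTop ≤ 2 * (1 - stdGaussianCDF z))
    (ν : ℝ)
    (zν : ℝ) (hzν0 : 0 < zν) (hzν : stdGaussianCDF zν = 1 - ν / (2 * L))
    (c : ℝ) (hc : c = (2 * Real.pi) ^ (-(L : ℝ) / 2) * Real.exp (-((L : ℝ) / 2) * zν ^ 2))
    (err : ℕ → ℕ → ℝ)
    (herr : ∀ n M, err n M = (1 / 2) * (2 * Real.log n / (c * M)) ^ (1 / (L : ℝ))) :
    1 - ν ≤
      Filter.liminf (fun n : ℕ =>
        Filter.liminf (fun M : ℕ =>
          (P n {ω | ∃ m, 1 ≤ m ∧ m ≤ M ∧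
            ∀ l, |ψhat n ω l + σ n l * G n m ω l - ψ l| / σ n l ≤ err n M}).toReal)
          Filter.atTop) Filter.atTop := by
  have hcL : c = gaussianPDFReal 0 1 zν ^ L := by rw [hc, gaussianPDFReal_zero_one_pow]
  have htail_zν : 2 * (1 - stdGaussianCDF zν) = ν / L := by
    rw [hzν]
    field_simp
    ring
  have : Nonempty (Fin L) := ⟨⟨0, hL⟩⟩
  have hinner : ∀ n : ℕ, (P n).real {ω | ∀ l, |ψhat n ω l - ψ l| / σ n l ≤ zν} -
      exp (-(2 * log n)) ≤ liminf (fun M => (P n {ω | ∃ m, 1 ≤ m ∧ m ≤ M ∧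
        ∀ l, |ψhat n ω l + σ n l * G n m ω l - ψ l| / σ n l ≤ err n M}).toReal) atTop := fun n =>
    measureReal_sub_exp_neg_le_liminf_resample_hit (hψhatMeas n) (hσ n) (hGmeas n)
      (hGiid n) (hGgauss n) (hGindepData n) hzν0.le (by positivity) (by simpa using hcL)
      (by simpa using herr n)
  have houter : ∀ ε > 0, ∀ᶠ n in atTop,
      1 - ν - ε ≤ (P n).real {ω | ∀ l, |ψhat n ω l - ψ l| / σ n l ≤ zν} := fun ε hε => by
    simpa [mul_div_cancel₀ ν (by positivity : (L : ℝ) ≠ 0)] using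
      eventually_one_sub_sum_sub_le_measureReal (β := fun _ => ν / L)
        (A := fun n => {ω | ∀ l, |ψhat n ω l - ψ l| / σ n l ≤ zν})
        (fun n ω hω => by
          obtain ⟨l, hl⟩ := by simpa using hω
          exact Set.mem_iUnion.2 ⟨l, hl.le⟩) (fun l => (htail l zν hzν0).trans_eq htail_zν) hε
  have hdecay : Tendsto (fun n : ℕ => exp (-(2 * log n))) atTop (𝓝 0) :=
    tendsto_exp_atBot.comp <| tendsto_neg_atTop_atBot.comp <|
      (tendsto_log_atTop.comp tendsto_natCast_atTop_atTop).const_mul_atTop two_pos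
  refine le_liminf_of_forall_eventually_sub_le (fun n => liminf_le_of_frequently_le
    (.of_forall fun M => measureReal_le_one) (isBoundedUnder_of ⟨0, fun M => measureReal_nonneg⟩))
    fun ε hε => ?_
  filter_upwards [houter (ε / 2) (half_pos hε), hdecay.eventually (gt_mem_nhds (half_pos hε))]
    with n hA hexp
  linarith [hinner n]

/-- **Theorem 1 of the paper.** Resampling guarantee: if the standardized
statistics `(ψ̂_{n,l} − ψ_l)/σ_{n,l}` satisfy an asymptotic Gaussian tail bound, and the
resampled statistics are `ψ̂_n^{[m]} = ψ̂_n + σ_n ⊙ G_{n,m}` with i.i.d. standard Gaussian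
noise independent of the data, then
`liminf_n liminf_M P(min_{1≤m≤M} max_l |ψ̂_{n,l}^{[m]} − ψ_l|/σ_{n,l} ≤ err_n(M,ν)) ≥ 1 − ν`,
where `err_n(M,ν) = (1/2)(2 log n /(c(ν) M))^{1/L}` and
`c(ν) = (2π)^{−L/2} exp(−(L/2) z_ν²)` with `Φ(z_ν) = 1 − ν/(2L)`. -/
theorem resampling_min_max_coverage
    (L : ℕ) (hL : 1 ≤ L) (ψ : Fin L → ℝ)
    {Ω : ℕ → Type*} [∀ n, MeasurableSpace (Ω n)]
    (P : ∀ n, Measure (Ω n)) [∀ n, IsProbabilityMeasure (P n)]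
    (ψhat : ∀ n, Ω n → Fin L → ℝ)
    (hψhatMeas : ∀ n, Measurable (ψhat n))
    (σ : ℕ → Fin L → ℝ) (hσ : ∀ n l, 0 < σ n l)
    (G : ∀ n, ℕ → Ω n → Fin L → ℝ)
    (hGmeas : ∀ n m l, Measurable (fun ω => G n m ω l))
    (hGiid : ∀ n, ProbabilityTheory.iIndepFun
      (fun (p : ℕ × Fin L) (ω : Ω n) => G n p.1 ω p.2) (P n))
    (hGgauss : ∀ n (p : ℕ × Fin L),
      Measure.map (fun ω => G n p.1 ω p.2) (P n) = ProbabilityTheory.gaussianReal 0 1)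
    (hGindepData : ∀ n, ProbabilityTheory.IndepFun
      (fun (ω : Ω n) (p : ℕ × Fin L) => G n p.1 ω p.2) (ψhat n) (P n))
    (htail : ∀ (l : Fin L) (z : ℝ), 0 < z →
      Filter.limsup (fun n => (P n {ω | z ≤ |ψhat n ω l - ψ l| / σ n l}).toReal)
        Filter.atTop ≤ 2 * (1 - stdGaussianCDF z))
    (ν : ℝ) (hν0 : 0 < ν) (hν : ν ≤ 1 / 2)
    (zν : ℝ) (hzν0 : 0 < zν) (hzν : stdGaussianCDF zν = 1 - ν / (2 * L))
    (c : ℝ) (hc : c = (2 * Real.pi) ^ (-(L : ℝ) / 2) * Real.exp (-((L : ℝ) / 2) * zν ^ 2))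
    (err : ℕ → ℕ → ℝ)
    (herr : ∀ n M, err n M = (1 / 2) * (2 * Real.log n / (c * M)) ^ (1 / (L : ℝ))) :
    1 - ν ≤
      Filter.liminf (fun n : ℕ =>
        Filter.liminf (fun M : ℕ =>
          (P n {ω | ∃ m, 1 ≤ m ∧ m ≤ M ∧
            ∀ l, |ψhat n ω l + σ n l * G n m ω l - ψ l| / σ n l ≤ err n M}).toReal)
          Filter.atTop) Filter.atTop :=
  resampling_min_max_coverage_general L hL ψ P ψhat hψhatMeas σ hσ G hGmeas hGiid hGgauss
    hGindepData htail ν zν hzν0 hzν c hc err herr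
end

section
/- Let L ≥ 1, let Z be a standard Gaussian vector in ℝ^L (i.e., its L coordinates are i.i.d. N(0,1)), let u ∈ ℝ^L, and let ε > 0. Then P( max_{1≤l≤L} |Z_l − u_l| ≤ ε ) ≥ (2ε)^L · ( (2π)^{−L/2} e^{−‖u‖₂²/2} − (2π)^{−L/2} e^{−1/2} √L ε ). -/
/-!
By independence the law of `Z` is the product Gaussian measure, with density
`(2π)^{-L/2} e^{-‖x‖₂²/2}`. Since `t ↦ e^{-t²/2}` is `e^{-1/2}`-Lipschitz and the Euclidean norm
is at most `√L` times the sup norm, on the sup-norm ball of radius `ε` around `u` this density is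
at least its value at `u` minus `(2π)^{-L/2} e^{-1/2} √L ε`; the ball has volume `(2ε)^L`.
-/

open MeasureTheory ProbabilityTheory Real Metric Set
open scoped NNReal

lemma abs_mul_exp_neg_sq_div_two_le (t : ℝ) : |t| * exp (-t ^ 2 / 2) ≤ exp (-1 / 2) := by
  have h : |t| ≤ exp ((t ^ 2 - 1) / 2) := by
    nlinarith [add_one_le_exp ((t ^ 2 - 1) / 2), sq_nonneg (|t| - 1), sq_abs t]
  calc |t| * exp (-t ^ 2 / 2) ≤ exp ((t ^ 2 - 1) / 2) * exp (-t ^ 2 / 2) := by gcongr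
    _ = exp (-1 / 2) := by rw [← exp_add]; ring_nf

lemma lipschitzWith_exp_neg_sq_div_two :
    LipschitzWith (exp (-1 / 2)).toNNReal fun t : ℝ ↦ exp (-t ^ 2 / 2) := by
  have hderiv (t : ℝ) :
      HasDerivAt (fun s : ℝ ↦ exp (-s ^ 2 / 2)) (exp (-t ^ 2 / 2) * -t) t :=
    (((hasDerivAt_pow 2 t).neg.div_const 2).congr_deriv (by norm_num; ring)).exp
  refine lipschitzWith_of_nnnorm_deriv_le (fun t ↦ (hderiv t).differentiableAt) fun t ↦ ?_
  rw [(hderiv t).deriv, ← NNReal.coe_le_coe, coe_nnnorm, norm_mul, norm_neg, mul_comm,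
    norm_of_nonneg (exp_pos _).le, norm_eq_abs, coe_toNNReal _ (exp_pos _).le]
  exact abs_mul_exp_neg_sq_div_two_le t

section

variable {ι : Type*} [Fintype ι]

lemma lipschitzWith_exp_neg_sum_sq_div_two :
    LipschitzWith ((exp (-1 / 2)).toNNReal * NNReal.sqrt (Fintype.card ι))
      fun x : ι → ℝ ↦ exp (-(∑ i, x i ^ 2) / 2) := by
  -- `ι → ℝ` carries the sup norm; passing to `EuclideanSpace ℝ ι` costs the factor `√(card ι)`.
  have h := lipschitzWith_exp_neg_sq_div_two.comp
    (lipschitzWith_one_norm.comp (PiLp.lipschitzWith_toLp 2 fun _ : ι ↦ ℝ))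
  convert h using 1
  · simp [NNReal.sqrt_eq_rpow]
  · funext x
    simp [EuclideanSpace.norm_eq, sq_sqrt (by positivity : (0 : ℝ) ≤ ∑ i, x i ^ 2)]

lemma exp_neg_sum_sq_div_two_sub_le {u x : ι → ℝ} {ε : ℝ}
    (hx : x ∈ closedBall u ε) :
    exp (-(∑ i, u i ^ 2) / 2) - exp (-1 / 2) * √(Fintype.card ι) * ε ≤
      exp (-(∑ i, x i ^ 2) / 2) := by
  have h := lipschitzWith_exp_neg_sum_sq_div_two.dist_le_mul u x
  rw [dist_comm u x, Real.dist_eq] at h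
  push_cast [coe_toNNReal _ (exp_pos _).le] at h
  have hε : exp (-1 / 2) * √(Fintype.card ι) * dist x u ≤
      exp (-1 / 2) * √(Fintype.card ι) * ε := by
    gcongr
    exact hx
  linarith [le_abs_self (exp (-(∑ i, u i ^ 2) / 2) - exp (-(∑ i, x i ^ 2) / 2))]

lemma prod_gaussianPDFReal_zero_one (x : ι → ℝ) :
    ∏ i, gaussianPDFReal 0 1 (x i) =
      (2 * π) ^ (-(Fintype.card ι : ℝ) / 2) * exp (-(∑ i, x i ^ 2) / 2) := by
  have hconst : (√(2 * π))⁻¹ ^ Fintype.card ι = (2 * π) ^ (-(Fintype.card ι : ℝ) / 2) := by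
    rw [sqrt_eq_rpow, ← rpow_neg (by positivity), ← rpow_natCast, ← rpow_mul (by positivity)]
    ring_nf
  have hpdf (t : ℝ) : gaussianPDFReal 0 1 t = (√(2 * π))⁻¹ * exp (-t ^ 2 / 2) := by
    simp [gaussianPDFReal]
  simp only [hpdf, Finset.prod_mul_distrib, Finset.prod_const, Finset.card_univ, hconst,
    ← exp_sum, ← Finset.sum_div, Finset.sum_neg_distrib]

lemma measureReal_pi_gaussianReal_univ_pi (μ : ℝ) {v : ℝ≥0} (hv : v ≠ 0) (s : ι → Set ℝ) :
    (Measure.pi fun _ : ι ↦ gaussianReal μ v).real (univ.pi s) =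
      ∫ x in univ.pi s, ∏ i, gaussianPDFReal μ v (x i) := by
  rw [measureReal_def, Measure.pi_pi, ENNReal.toReal_prod, volume_pi, Measure.restrict_pi_pi,
    integral_fintype_prod_eq_prod]
  refine Finset.prod_congr rfl fun i _ ↦ ?_
  rw [gaussianReal_apply_eq_integral μ hv,
    ENNReal.toReal_ofReal (integral_nonneg fun _ ↦ gaussianPDFReal_nonneg _ _ _)]

lemma le_measureReal_pi_gaussianReal_closedBall (u : ι → ℝ) {ε : ℝ}
    (hε : 0 ≤ ε) :
    (2 * ε) ^ Fintype.card ι *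
        ((2 * π) ^ (-(Fintype.card ι : ℝ) / 2) * exp (-(∑ i, u i ^ 2) / 2) -
          (2 * π) ^ (-(Fintype.card ι : ℝ) / 2) * exp (-1 / 2) * √(Fintype.card ι) * ε) ≤
      (Measure.pi fun _ : ι ↦ gaussianReal 0 1).real (closedBall u ε) := by
  have hdensity : ∀ x ∈ closedBall u ε,
      (2 * π) ^ (-(Fintype.card ι : ℝ) / 2) * exp (-(∑ i, u i ^ 2) / 2) -
          (2 * π) ^ (-(Fintype.card ι : ℝ) / 2) * exp (-1 / 2) * √(Fintype.card ι) * ε ≤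
        ∏ i, gaussianPDFReal 0 1 (x i) := by
    intro x hx
    rw [prod_gaussianPDFReal_zero_one]
    have := mul_le_mul_of_nonneg_left (exp_neg_sum_sq_div_two_sub_le hx)
      (rpow_nonneg (by positivity : (0 : ℝ) ≤ 2 * π) (-(Fintype.card ι : ℝ) / 2))
    linarith
  have hint : IntegrableOn (fun x : ι → ℝ ↦ ∏ i, gaussianPDFReal 0 1 (x i)) (closedBall u ε) :=
    (Integrable.fintype_prod fun _ ↦ integrable_gaussianPDFReal 0 1).integrableOn
  have hbound := setIntegral_ge_of_const_le_real measurableSet_closedBall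
    (by rw [Real.volume_pi_closedBall u hε]; exact ENNReal.ofReal_ne_top) hdensity hint
  rw [measureReal_def, Real.volume_pi_closedBall u hε, ENNReal.toReal_ofReal (by positivity)]
    at hbound
  rw [closedBall_pi u hε, measureReal_pi_gaussianReal_univ_pi 0 one_ne_zero, ← closedBall_pi u hε]
  linarith

end

lemma ProbabilityTheory.iIndepFun.map_eq_pi {Ω ι : Type*} [Fintype ι] [MeasurableSpace Ω]
    {P : Measure Ω} {E : ι → Type*} [∀ i, MeasurableSpace (E i)] {Z : Ω → ∀ i, E i} {ν : ∀ i, Measure (E i)}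
    [∀ i, IsProbabilityMeasure (ν i)] (hindep : iIndepFun (fun i ω ↦ Z ω i) P)
    (hlaw : ∀ i, P.map (fun ω ↦ Z ω i) = ν i) :
    P.map Z = Measure.pi ν := by
  have hZ (i : ι) : AEMeasurable (fun ω ↦ Z ω i) P :=
    .of_map_ne_zero (hlaw i ▸ IsProbabilityMeasure.ne_zero (ν i))
  rw [← funext hlaw]
  exact hindep.map_fun_eq_pi_map hZ

theorem gaussian_small_ball_lower_bound_general {Ω : Type*} [MeasurableSpace Ω]
    (P : Measure Ω)
    (L : ℕ) (Z : Ω → Fin L → ℝ)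
    (hindep : ProbabilityTheory.iIndepFun
      (fun l ω => Z ω l) P)
    (hgauss : ∀ l, Measure.map (fun ω => Z ω l) P = ProbabilityTheory.gaussianReal 0 1)
    (u : Fin L → ℝ) (ε : ℝ) (hε : 0 < ε) :
    (2 * ε) ^ L *
        ((2 * Real.pi) ^ (-(L : ℝ) / 2) * Real.exp (-(∑ l, (u l) ^ 2) / 2) -
          (2 * Real.pi) ^ (-(L : ℝ) / 2) * Real.exp (-(1 : ℝ) / 2) * Real.sqrt L * ε) ≤
      (P {ω | ∀ l, |Z ω l - u l| ≤ ε}).toReal := by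
  have hlaw : P.map Z = Measure.pi fun _ ↦ gaussianReal 0 1 := hindep.map_eq_pi hgauss
  have hZ : AEMeasurable Z P := .of_map_ne_zero (hlaw ▸ IsProbabilityMeasure.ne_zero _)
  have hevent : {ω | ∀ l, |Z ω l - u l| ≤ ε} = Z ⁻¹' closedBall u ε := by
    ext ω
    simp [dist_pi_le_iff hε.le, Real.dist_eq]
  rw [hevent, ← Measure.map_apply_of_aemeasurable hZ measurableSet_closedBall, hlaw]
  simpa [measureReal_def] using le_measureReal_pi_gaussianReal_closedBall u hε.le

/-- Small-ball lower bound for a standard Gaussian vector `Z` in `ℝ^L`: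
`P(max_l |Z_l − u_l| ≤ ε) ≥ (2ε)^L ((2π)^{−L/2} e^{−‖u‖₂²/2} − (2π)^{−L/2} e^{−1/2} √L ε)`. -/
theorem gaussian_small_ball_lower_bound {Ω : Type*} [MeasurableSpace Ω]
    (P : Measure Ω) [IsProbabilityMeasure P]
    (L : ℕ) (hL : 1 ≤ L) (Z : Ω → Fin L → ℝ)
    (hmeas : ∀ l, Measurable (fun ω => Z ω l))
    (hindep : ProbabilityTheory.iIndepFun
      (fun l ω => Z ω l) P)
    (hgauss : ∀ l, Measure.map (fun ω => Z ω l) P = ProbabilityTheory.gaussianReal 0 1)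
    (u : Fin L → ℝ) (ε : ℝ) (hε : 0 < ε) :
    (2 * ε) ^ L *
        ((2 * Real.pi) ^ (-(L : ℝ) / 2) * Real.exp (-(∑ l, (u l) ^ 2) / 2) -
          (2 * Real.pi) ^ (-(L : ℝ) / 2) * Real.exp (-(1 : ℝ) / 2) * Real.sqrt L * ε) ≤
      (P {ω | ∀ l, |Z ω l - u l| ≤ ε}).toReal :=
  gaussian_small_ball_lower_bound_general P L Z hindep hgauss u ε hε
end

section
/- Let L ≥ 1 and M ≥ 1, let Z_1, …, Z_M be i.i.d. standard Gaussian vectors in ℝ^L (each with i.i.d. N(0,1) coordinates), let u ∈ ℝ^L, let ε > 0, and write f(u) = (2π)^{−L/2} e^{−‖u‖₂²/2}. If (2π)^{−L/2} e^{−1/2} √L · ε ≤ f(u)/2, then P( min_{1≤m≤M} max_{1≤l≤L} |Z_{m,l} − u_l| ≤ ε ) ≥ 1 − exp( −M · (f(u)/2) · (2ε)^L ). -/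
open MeasureTheory ProbabilityTheory Real

/-!
The sup-norm ball of radius `ε` around `u` is a box, so its standard Gaussian mass is a product
of one-dimensional masses, each at least `2ε` times the density at `|u l| + ε`. The product of
these densities is the Gaussian density at `(|u l| + ε)_l`, a point whose Euclidean norm exceeds
`‖u‖₂` by at most `√L ε`; as `r ↦ exp (-r² / 2)` is decreasing on `[0, ∞)` and
`exp (-1/2)`-Lipschitz, that density is at least `f(u) - (2π)^(-L/2) exp (-1/2) √L ε ≥ f(u)/2`.
Independence makes the `M` rows i.i.d., so all of them miss the ball with probability
`(1 - p)^M ≤ exp (-M p)`.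
-/

theorem mul_exp_neg_sq_half_le (t : ℝ) : t * exp (-t ^ 2 / 2) ≤ exp (-1 / 2) := by
  have ht : t ≤ exp ((t ^ 2 - 1) / 2) := by
    calc t ≤ exp (t - 1) := by linarith [add_one_le_exp (t - 1)]
      _ ≤ exp ((t ^ 2 - 1) / 2) := exp_le_exp.2 (by nlinarith [sq_nonneg (t - 1)])
  calc t * exp (-t ^ 2 / 2) ≤ exp ((t ^ 2 - 1) / 2) * exp (-t ^ 2 / 2) := by gcongr
    _ = exp (-1 / 2) := by rw [← exp_add]; ring_nf

theorem lipschitzWith_exp_neg_sq_half :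
    LipschitzWith (exp (-1 / 2)).toNNReal fun r : ℝ => exp (-r ^ 2 / 2) := by
  have hderiv (r : ℝ) : HasDerivAt (fun r : ℝ => exp (-r ^ 2 / 2)) (exp (-r ^ 2 / 2) * -r) r :=
    (((hasDerivAt_pow 2 r).neg.div_const 2).exp).congr_deriv (by simp only [Pi.neg_apply]; ring)
  refine lipschitzWith_of_nnnorm_deriv_le (fun r => (hderiv r).differentiableAt) fun r => ?_
  rw [← NNReal.coe_le_coe, coe_nnnorm, coe_toNNReal _ (exp_pos _).le, (hderiv r).deriv, norm_mul,
    norm_neg, Real.norm_eq_abs, abs_of_pos (exp_pos _), Real.norm_eq_abs, mul_comm, ← sq_abs r]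
  exact mul_exp_neg_sq_half_le |r|

theorem antitoneOn_exp_neg_sq_half : AntitoneOn (fun r : ℝ => exp (-r ^ 2 / 2)) (Set.Ici 0) :=
  fun _ ha _ _ hab => exp_le_exp.2 (by gcongr)

theorem exp_neg_sq_half_sub_le {a b h : ℝ} (ha : 0 ≤ a) (hh : 0 ≤ h) (hb : 0 ≤ b)
    (hba : b ≤ a + h) : exp (-a ^ 2 / 2) - exp (-1 / 2) * h ≤ exp (-b ^ 2 / 2) := by
  have hlip := lipschitzWith_exp_neg_sq_half.dist_le_mul a (a + h)
  simp only [Real.dist_eq, sub_add_cancel_left, abs_neg, abs_of_nonneg hh,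
    coe_toNNReal _ (exp_pos _).le] at hlip
  have hmono : exp (-(a + h) ^ 2 / 2) ≤ exp (-b ^ 2 / 2) :=
    antitoneOn_exp_neg_sq_half hb (by simp only [Set.mem_Ici]; positivity) hba
  linarith [(abs_le.1 hlip).2]

theorem sqrt_sum_sq_abs_add_le {ι : Type*} [Fintype ι] (u : ι → ℝ) {ε : ℝ} (hε : 0 ≤ ε) :
    √(∑ i, (|u i| + ε) ^ 2) ≤ √(∑ i, u i ^ 2) + √(Fintype.card ι) * ε := by
  have key := norm_add_le (WithLp.toLp 2 fun i => |u i| : EuclideanSpace ℝ ι)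
    (WithLp.toLp 2 fun _ => ε)
  simp only [EuclideanSpace.norm_eq, PiLp.add_apply, Real.norm_eq_abs, abs_abs, sq_abs] at key
  rwa [Finset.sum_const, Finset.card_univ, nsmul_eq_mul, sqrt_mul (Nat.cast_nonneg _),
    sqrt_sq hε] at key

section StdGaussian

variable {ι : Type*} [Fintype ι]

noncomputable def stdGaussianPDFReal (x : ι → ℝ) : ℝ :=
  (2 * π) ^ (-(Fintype.card ι : ℝ) / 2) * exp (-(∑ i, x i ^ 2) / 2)

theorem prod_gaussianPDFReal_zero_one_s6 (x : ι → ℝ) :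
    ∏ i, gaussianPDFReal 0 1 (x i) = stdGaussianPDFReal x := by
  have hconst : (√(2 * π))⁻¹ ^ Fintype.card ι = (2 * π) ^ (-(Fintype.card ι : ℝ) / 2) := by
    rw [sqrt_eq_rpow, ← rpow_neg (by positivity), ← rpow_natCast, ← rpow_mul (by positivity)]
    ring_nf
  simp only [gaussianPDFReal, NNReal.coe_one, mul_one, sub_zero]
  rw [Finset.prod_mul_distrib, Finset.prod_const, Finset.card_univ, hconst, ← exp_sum,
    ← Finset.sum_div, Finset.sum_neg_distrib, stdGaussianPDFReal]

theorem stdGaussianPDFReal_sub_le (u : ι → ℝ) {ε : ℝ} (hε : 0 ≤ ε) :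
    stdGaussianPDFReal u - (2 * π) ^ (-(Fintype.card ι : ℝ) / 2) * exp (-1 / 2) *
      √(Fintype.card ι) * ε ≤ stdGaussianPDFReal fun i => |u i| + ε := by
  have hnorm := exp_neg_sq_half_sub_le (sqrt_nonneg _) (by positivity) (sqrt_nonneg _)
    (sqrt_sum_sq_abs_add_le u hε)
  rw [sq_sqrt (by positivity), sq_sqrt (by positivity)] at hnorm
  have hconst : 0 ≤ (2 * π) ^ (-(Fintype.card ι : ℝ) / 2) := by positivity
  unfold stdGaussianPDFReal
  nlinarith [mul_le_mul_of_nonneg_left hnorm hconst]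

theorem mul_gaussianPDFReal_le_measureReal_closedBall (c : ℝ) {ε : ℝ} (hε : 0 ≤ ε) :
    2 * ε * gaussianPDFReal 0 1 (|c| + ε) ≤ (gaussianReal 0 1).real (Metric.closedBall c ε) := by
  have hdensity : ∀ x ∈ Metric.closedBall c ε,
      gaussianPDFReal 0 1 (|c| + ε) ≤ gaussianPDFReal 0 1 x := by
    intro x hx
    have hsq : x ^ 2 ≤ (|c| + ε) ^ 2 := by
      rw [sq_le_sq, abs_of_nonneg (by positivity : 0 ≤ |c| + ε)]
      rw [Metric.mem_closedBall, Real.dist_eq] at hx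
      linarith [abs_sub_abs_le_abs_sub x c]
    simp only [gaussianPDFReal, NNReal.coe_one, mul_one, sub_zero]
    gcongr ?_ * exp (-?_ / 2)
  rw [measureReal_def, gaussianReal_apply_eq_integral 0 one_ne_zero,
    ENNReal.toReal_ofReal (setIntegral_nonneg measurableSet_closedBall
      fun x _ => gaussianPDFReal_nonneg 0 1 x)]
  have := setIntegral_ge_of_const_le_real measurableSet_closedBall measure_closedBall_lt_top.ne
    hdensity (integrable_gaussianPDFReal 0 1).integrableOn
  rwa [Real.volume_real_closedBall hε, mul_comm] at this

theorem pow_mul_le_measureReal_pi_gaussianReal_closedBall (u : ι → ℝ) {ε : ℝ} (hε : 0 ≤ ε) :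
    (2 * ε) ^ Fintype.card ι * (stdGaussianPDFReal u - (2 * π) ^ (-(Fintype.card ι : ℝ) / 2) *
      exp (-1 / 2) * √(Fintype.card ι) * ε) ≤
      (Measure.pi fun _ : ι => gaussianReal 0 1).real (Metric.closedBall u ε) := by
  calc _ ≤ (2 * ε) ^ Fintype.card ι * stdGaussianPDFReal fun i => |u i| + ε := by
        gcongr; exact stdGaussianPDFReal_sub_le u hε
    _ = ∏ i, 2 * ε * gaussianPDFReal 0 1 (|u i| + ε) := by
        rw [← prod_gaussianPDFReal_zero_one_s6, Finset.prod_mul_distrib, Finset.prod_const,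
          Finset.card_univ]
    _ ≤ ∏ i, (gaussianReal 0 1).real (Metric.closedBall (u i) ε) :=
        Finset.prod_le_prod (fun i _ => by positivity [gaussianPDFReal_nonneg 0 1 (|u i| + ε)])
          fun i _ => mul_gaussianPDFReal_le_measureReal_closedBall (u i) hε
    _ = _ := by
        rw [closedBall_pi _ hε, measureReal_def, Measure.pi_pi, ENNReal.toReal_prod]
        rfl

end StdGaussian

theorem ProbabilityTheory.iIndepFun.map_rows_eq_pi_pi {Ω ι κ β : Type*} [MeasurableSpace Ω]
    [MeasurableSpace β] [Fintype ι] [Fintype κ] {P : Measure Ω} {ν : Measure β}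
    [IsProbabilityMeasure ν] {Z : ι → Ω → κ → β} (hmeas : ∀ i j, Measurable fun ω => Z i ω j)
    (hindep : iIndepFun (fun (p : ι × κ) ω => Z p.1 ω p.2) P)
    (hlaw : ∀ i j, P.map (fun ω => Z i ω j) = ν) :
    P.map (fun ω i => Z i ω) = Measure.pi fun _ : ι => Measure.pi fun _ : κ => ν := by
  have hjoint := hindep.map_fun_eq_pi_map fun (p : ι × κ) => (hmeas p.1 p.2).aemeasurable
  simp only [hlaw] at hjoint
  have hjoint_meas : Measurable fun ω (p : ι × κ) => Z p.1 ω p.2 :=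
    measurable_pi_lambda _ fun p => hmeas p.1 p.2
  have hcurry : (fun ω i => Z i ω) =
      MeasurableEquiv.curry ι κ β ∘ fun ω (p : ι × κ) => Z p.1 ω p.2 := rfl
  rw [hcurry, ← Measure.map_map (MeasurableEquiv.measurable _) hjoint_meas, hjoint,
    ← Measure.infinitePi_eq_pi, Measure.infinitePi_map_curry fun _ _ => ν]
  simp only [Measure.infinitePi_eq_pi]

theorem one_sub_exp_le_measureReal_pi_exists_mem {α ι : Type*} [MeasurableSpace α] [Fintype ι]
    {μ : Measure α} [IsProbabilityMeasure μ] {B : Set α} (hB : MeasurableSet B) :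
    1 - exp (-(Fintype.card ι * μ.real B)) ≤
      (Measure.pi fun _ : ι => μ).real {x | ∃ i, x i ∈ B} := by
  have hmiss : {x : ι → α | ∃ i, x i ∈ B}ᶜ = Set.univ.pi fun _ => Bᶜ := by
    ext x; simp
  have hmiss_prob : (Measure.pi fun _ : ι => μ).real {x | ∃ i, x i ∈ B}ᶜ =
      (1 - μ.real B) ^ Fintype.card ι := by
    rw [hmiss, measureReal_def, Measure.pi_pi, ENNReal.toReal_prod, ← measureReal_def,
      probReal_compl_eq_one_sub hB, Finset.prod_const, Finset.card_univ]
  have hpow : (1 - μ.real B) ^ Fintype.card ι ≤ exp (-(Fintype.card ι * μ.real B)) := by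
    rw [← mul_neg, exp_nat_mul]
    exact pow_le_pow_left₀ (by simp) (one_sub_le_exp_neg _) _
  rw [probReal_compl_eq_one_sub (by measurability)] at hmiss_prob
  linarith

theorem gaussian_resample_hit_prob_general {Ω : Type*} [MeasurableSpace Ω]
    (P : Measure Ω) [IsProbabilityMeasure P]
    (L M : ℕ)
    (Z : Fin M → Ω → Fin L → ℝ)
    (hmeas : ∀ (m : Fin M) (l : Fin L), Measurable (fun ω => Z m ω l))
    (hindep : ProbabilityTheory.iIndepFun
      (fun (p : Fin M × Fin L) ω => Z p.1 ω p.2) P)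
    (hgauss : ∀ (m : Fin M) (l : Fin L),
      Measure.map (fun ω => Z m ω l) P = ProbabilityTheory.gaussianReal 0 1)
    (u : Fin L → ℝ) (ε : ℝ) (hε : 0 < ε)
    (fu : ℝ) (hfu : fu = (2 * Real.pi) ^ (-(L : ℝ) / 2) * Real.exp (-(∑ l, (u l) ^ 2) / 2))
    (hsmall : (2 * Real.pi) ^ (-(L : ℝ) / 2) * Real.exp (-(1 : ℝ) / 2) * Real.sqrt L * ε ≤
      fu / 2) :
    1 - Real.exp (-(M : ℝ) * (fu / 2) * (2 * ε) ^ L) ≤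
      (P {ω | ∃ m, ∀ l, |Z m ω l - u l| ≤ ε}).toReal := by
  have hrows : Measurable fun ω m => Z m ω :=
    measurable_pi_lambda _ fun m => measurable_pi_lambda _ (hmeas m)
  have hevent : {ω | ∃ m, ∀ l, |Z m ω l - u l| ≤ ε} =
      (fun ω m => Z m ω) ⁻¹' {x | ∃ m, x m ∈ Metric.closedBall u ε} := by
    ext ω
    simp [dist_pi_le_iff hε.le, Real.dist_eq]
  have hball : fu / 2 * (2 * ε) ^ L ≤
      (Measure.pi fun _ : Fin L => gaussianReal 0 1).real (Metric.closedBall u ε) := by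
    have h := pow_mul_le_measureReal_pi_gaussianReal_closedBall u hε.le
    rw [stdGaussianPDFReal, Fintype.card_fin, ← hfu] at h
    nlinarith [pow_pos (by positivity : 0 < 2 * ε) L]
  rw [hevent, ← measureReal_def, ← map_measureReal_apply hrows (by measurability),
    hindep.map_rows_eq_pi_pi hmeas hgauss]
  calc _ ≤ 1 - exp (-(Fintype.card (Fin M) *
        (Measure.pi fun _ : Fin L => gaussianReal 0 1).real (Metric.closedBall u ε))) := by
        rw [Fintype.card_fin, neg_mul, neg_mul, mul_assoc]
        gcongr
    _ ≤ _ := one_sub_exp_le_measureReal_pi_exists_mem measurableSet_closedBall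

/-- For `Z_1, …, Z_M` i.i.d. standard Gaussian vectors in `ℝ^L`, `u ∈ ℝ^L`,
`ε > 0` with `(2π)^{−L/2} e^{−1/2} √L ε ≤ f(u)/2` where `f(u) = (2π)^{−L/2} e^{−‖u‖₂²/2}`,
one has `P(min_m max_l |Z_{m,l} − u_l| ≤ ε) ≥ 1 − exp(−M (f(u)/2) (2ε)^L)`. -/
theorem gaussian_resample_hit_prob {Ω : Type*} [MeasurableSpace Ω]
    (P : Measure Ω) [IsProbabilityMeasure P]
    (L M : ℕ) (hL : 1 ≤ L) (hM : 1 ≤ M)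
    (Z : Fin M → Ω → Fin L → ℝ)
    (hmeas : ∀ (m : Fin M) (l : Fin L), Measurable (fun ω => Z m ω l))
    (hindep : ProbabilityTheory.iIndepFun
      (fun (p : Fin M × Fin L) ω => Z p.1 ω p.2) P)
    (hgauss : ∀ (m : Fin M) (l : Fin L),
      Measure.map (fun ω => Z m ω l) P = ProbabilityTheory.gaussianReal 0 1)
    (u : Fin L → ℝ) (ε : ℝ) (hε : 0 < ε)
    (fu : ℝ) (hfu : fu = (2 * Real.pi) ^ (-(L : ℝ) / 2) * Real.exp (-(∑ l, (u l) ^ 2) / 2))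
    (hsmall : (2 * Real.pi) ^ (-(L : ℝ) / 2) * Real.exp (-(1 : ℝ) / 2) * Real.sqrt L * ε ≤
      fu / 2) :
    1 - Real.exp (-(M : ℝ) * (fu / 2) * (2 * ε) ^ L) ≤
      (P {ω | ∃ m, ∀ l, |Z m ω l - u l| ≤ ε}).toReal :=
  gaussian_resample_hit_prob_general P L M Z hmeas hindep hgauss u ε hε fu hfu hsmall
end
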